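/- arXiv:2004.05162 — 8 statements merged into one kernel-verified Lean document; each statement's English description precedes it below -/
import Mathlib

section
/- If m ≥ 2 and f ≥ 1 are integers with n = m + f - 1 such that ∑_{i=m}^{n} 1/i < 1 < ∑_{i=m}^{n+1} 1/i, then f < m(e-1), hence f ≤ ⌊m(e-1)⌋. -/
theorem stmt2 (m f n : ℕ) (hm : 2 ≤ m) (hf : 1 ≤ f) (hn : n = m + f - 1)
    (h1 : (∑ i ∈ Finset.Icc m n, (1 : ℝ) / i) < 1)
    (h2 : (1 : ℝ) < ∑ i ∈ Finset.Icc m (n + 1), (1 : ℝ) / i) :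
    (f : ℝ) < m * (Real.exp 1 - 1) ∧ (f : ℤ) ≤ ⌊(m : ℝ) * (Real.exp 1 - 1)⌋ := by
  have hm0 : (0:ℝ) < m := by exact_mod_cast Nat.lt_of_lt_of_le (by norm_num) hm
  have hIcc : Finset.Icc m n = Finset.Ico m (m + f) := by
    have : m + f = n + 1 := by omega
    rw [this, Finset.Ico_add_one_right_eq_Icc]
  have key : ∀ k : ℕ, Real.log ((m:ℝ) + k) - Real.log m ≤
      ∑ i ∈ Finset.Ico m (m + k), (1:ℝ) / i := by
    intro k
    induction k with
    | zero => simp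
    | succ k ih =>
      have hmk : (0:ℝ) < (m:ℝ) + k := by positivity
      rw [show m + (k+1) = (m+k) + 1 from rfl,
        Finset.sum_Ico_succ_top (Nat.le_add_right m k)]
      have hlog : Real.log ((m:ℝ) + k + 1) - Real.log ((m:ℝ) + k) ≤ 1 / ((m:ℝ) + k) := by
        rw [← Real.log_div (by positivity) (ne_of_gt hmk)]
        have h := Real.log_le_sub_one_of_pos
          (show (0:ℝ) < ((m:ℝ) + k + 1) / ((m:ℝ) + k) from by positivity)
        have : ((m:ℝ) + k + 1) / ((m:ℝ) + k) - 1 = 1 / ((m:ℝ) + k) := by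
          field_simp
          ring
        linarith [h, this.ge]
      have hcast : ((m + k : ℕ) : ℝ) = (m:ℝ) + k := by push_cast; ring
      push_cast
      rw [hcast] at *
      have hr : (m:ℝ) + (k + 1) = (m:ℝ) + k + 1 := by ring
      rw [hr]
      linarith
  have hlt : Real.log ((m:ℝ) + f) - Real.log m < 1 := by
    have := key f
    rw [← hIcc] at this
    linarith
  have hpos : (0:ℝ) < ((m:ℝ) + f) / m := by positivity
  have hdiv : Real.log (((m:ℝ) + f) / m) < 1 := by
    rw [Real.log_div (by positivity) (ne_of_gt hm0)]
    exact hlt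
  have hexp : ((m:ℝ) + f) / m < Real.exp 1 := by
    calc ((m:ℝ) + f) / m = Real.exp (Real.log (((m:ℝ) + f) / m)) := (Real.exp_log hpos).symm
    _ < Real.exp 1 := Real.exp_lt_exp.mpr hdiv
  have h3 : (f:ℝ) < m * (Real.exp 1 - 1) := by
    have := (div_lt_iff₀ hm0).mp hexp
    nlinarith
  refine ⟨h3, ?_⟩
  rw [Int.le_floor]
  push_cast
  linarith
end

section
/- If m ≥ 2 and f ≥ 1 are integers with n = m + f - 1 such that ∑_{i=m}^{n} 1/i < 1 < ∑_{i=m}^{n+1} 1/i, then m(e-1) - e < f, hence ⌈m(e-1) - e⌉ ≤ f. -/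
lemma harm_log_bound (m : ℕ) (hm : 2 ≤ m) (k : ℕ) :
    ∑ i ∈ Finset.Icc m (m - 1 + k), (1 : ℝ) / i ≤
      Real.log ((m - 1 + k : ℕ) : ℝ) - Real.log ((m - 1 : ℕ) : ℝ) := by
  induction k with
  | zero =>
    rw [add_zero, Finset.Icc_eq_empty (by omega), Finset.sum_empty, sub_self]
  | succ k ih =>
    have hmk : m ≤ m - 1 + k + 1 := by omega
    have hstep : m - 1 + (k + 1) = (m - 1 + k) + 1 := by omega
    rw [hstep, Finset.sum_Icc_succ_top hmk]
    have ha : (0:ℝ) < ((m - 1 + k : ℕ) : ℝ) := by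
      have : 1 ≤ m - 1 + k := by omega
      exact_mod_cast Nat.lt_of_lt_of_le Nat.zero_lt_one this
    have hb : (0:ℝ) < ((m - 1 + k + 1 : ℕ) : ℝ) := by positivity
    have hcast : ((m - 1 + k + 1 : ℕ) : ℝ) = ((m - 1 + k : ℕ) : ℝ) + 1 := by
      push_cast; ring
    have key : (1:ℝ) / ((m - 1 + k + 1 : ℕ) : ℝ) ≤
        Real.log ((m - 1 + k + 1 : ℕ) : ℝ) - Real.log ((m - 1 + k : ℕ) : ℝ) := by
      have h := Real.log_le_sub_one_of_pos (div_pos ha hb)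
      rw [Real.log_div (ne_of_gt ha) (ne_of_gt hb)] at h
      have hgen : ∀ a : ℝ, 0 < a → a / (a + 1) - 1 = -(1 / (a + 1)) := by
        intro a ha'
        have : a + 1 ≠ 0 := by positivity
        field_simp
        ring
      have heq : ((m - 1 + k : ℕ) : ℝ) / ((m - 1 + k + 1 : ℕ) : ℝ) - 1
          = -(1 / ((m - 1 + k + 1 : ℕ) : ℝ)) := by
        rw [hcast]; exact hgen _ ha
      linarith [h, heq ▸ h]
    linarith [ih]

theorem stmt3 (m f n : ℕ) (hm : 2 ≤ m) (hf : 1 ≤ f) (hn : n = m + f - 1)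
    (h1 : (∑ i ∈ Finset.Icc m n, (1 : ℝ) / i) < 1)
    (h2 : (1 : ℝ) < ∑ i ∈ Finset.Icc m (n + 1), (1 : ℝ) / i) :
    (m : ℝ) * (Real.exp 1 - 1) - Real.exp 1 < f ∧
    ⌈(m : ℝ) * (Real.exp 1 - 1) - Real.exp 1⌉ ≤ (f : ℤ) := by
  have hn1 : n + 1 = m - 1 + (f + 1) := by omega
  have h := harm_log_bound m hm (f + 1)
  rw [← hn1] at h
  have hlog : (1:ℝ) < Real.log ((n + 1 : ℕ) : ℝ) - Real.log ((m - 1 : ℕ) : ℝ) := by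
    calc (1:ℝ) < _ := h2
    _ ≤ _ := by
      have : ((n:ℕ) + 1) = ((n+1 : ℕ)) := rfl
      convert h using 2 <;> push_cast <;> ring_nf
  have hB : (0:ℝ) < ((m - 1 : ℕ) : ℝ) := by
    have : 1 ≤ m - 1 := by omega
    exact_mod_cast Nat.lt_of_lt_of_le Nat.zero_lt_one this
  have hA : (0:ℝ) < ((n + 1 : ℕ) : ℝ) := by positivity
  have hexp : Real.exp 1 < ((n + 1 : ℕ) : ℝ) / ((m - 1 : ℕ) : ℝ) := by
    have := Real.exp_lt_exp.mpr hlog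
    rwa [Real.exp_sub, Real.exp_log hA, Real.exp_log hB] at this
  have hmul : Real.exp 1 * ((m - 1 : ℕ) : ℝ) < ((n + 1 : ℕ) : ℝ) :=
    (lt_div_iff₀ hB).mp hexp
  have hc1 : ((m - 1 : ℕ) : ℝ) = (m : ℝ) - 1 := by
    have : (1:ℕ) ≤ m := by omega
    push_cast [Nat.cast_sub this]; ring
  have hc2 : ((n + 1 : ℕ) : ℝ) = (m : ℝ) + (f : ℝ) := by
    have : n + 1 = m + f := by omega
    rw [this]; push_cast; ring
  rw [hc1, hc2] at hmul
  have hlt : (m : ℝ) * (Real.exp 1 - 1) - Real.exp 1 < f := by nlinarith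
  refine ⟨hlt, Int.ceil_le.mpr ?_⟩
  push_cast
  linarith
end

section
/- Let q be a positive integer. If m ≥ 2 and f ≥ 1 are integers with n = m + f - 1 such that ∑_{i=m}^{n} 1/i < q < ∑_{i=m}^{n+1} 1/i, then ⌈m(e^q - 1) - e^q⌉ ≤ f ≤ ⌊m(e^q - 1)⌋. -/
/-!
Comparing each term `1 / i` with `log (i + 1) - log i` from below and with `log i - log (i - 1)`
from above and telescoping gives
`log ((n + 1) / m) ≤ ∑_{i=m}^{n} 1/i` and `∑_{i=m}^{n+1} 1/i ≤ log ((n + 1) / (m - 1))`.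
With `n + 1 = m + f` the hypotheses therefore yield `(m - 1) e^q < m + f < m e^q`,
which is the claimed pair of bounds on `f`.
-/

open Finset Real

lemma Real.log_add_one_sub_log_le_inv {x : ℝ} (hx : 0 < x) : log (x + 1) - log x ≤ x⁻¹ := by
  rw [← log_div (by positivity) hx.ne']
  calc log ((x + 1) / x) ≤ (x + 1) / x - 1 := log_le_sub_one_of_pos (by positivity)
    _ = x⁻¹ := by field_simp; ring

lemma Real.inv_le_log_sub_log_sub_one {x : ℝ} (hx : 1 < x) : x⁻¹ ≤ log x - log (x - 1) := by
  have hx₁ : 0 < x - 1 := sub_pos.mpr hx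
  rw [← log_div (by positivity) hx₁.ne']
  calc x⁻¹ = 1 - ((x / (x - 1))⁻¹) := by field_simp; ring
    _ ≤ log (x / (x - 1)) := one_sub_inv_le_log_of_pos (by positivity)

lemma log_sub_log_le_sum_Ico_inv {m n : ℕ} (hm : 0 < m) (hmn : m ≤ n) :
    log n - log m ≤ ∑ i ∈ Ico m n, (1 : ℝ) / i := by
  calc log n - log m = ∑ i ∈ Ico m n, (log ((i + 1 : ℕ) : ℝ) - log (i : ℝ)) :=
        (sum_Ico_sub (fun i : ℕ ↦ log (i : ℝ)) hmn).symm
    _ ≤ ∑ i ∈ Ico m n, (1 : ℝ) / i := by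
        refine sum_le_sum fun i hi ↦ ?_
        have hi : (0 : ℝ) < i := by
          exact_mod_cast hm.trans_le (mem_Ico.mp hi).1
        simpa using log_add_one_sub_log_le_inv hi

lemma sum_Ico_inv_le_log_sub_log {m n : ℕ} (hm : 1 < m) (hmn : m ≤ n) :
    ∑ i ∈ Ico m n, (1 : ℝ) / i ≤ log ((n : ℝ) - 1) - log ((m : ℝ) - 1) := by
  calc ∑ i ∈ Ico m n, (1 : ℝ) / i
      ≤ ∑ i ∈ Ico m n, (log (((i + 1 : ℕ) : ℝ) - 1) - log ((i : ℝ) - 1)) := by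
        refine sum_le_sum fun i hi ↦ ?_
        have hi : (1 : ℝ) < i := by
          exact_mod_cast hm.trans_le (mem_Ico.mp hi).1
        simpa using inv_le_log_sub_log_sub_one hi
    _ = log ((n : ℝ) - 1) - log ((m : ℝ) - 1) :=
        sum_Ico_sub (fun i : ℕ ↦ log ((i : ℝ) - 1)) hmn

theorem stmt4_general (q m f n : ℕ) (hm : 2 ≤ m) (hn : n = m + f - 1)
    (h1 : (∑ i ∈ Finset.Icc m n, (1 : ℝ) / i) < q)
    (h2 : (q : ℝ) < ∑ i ∈ Finset.Icc m (n + 1), (1 : ℝ) / i) :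
    ⌈(m : ℝ) * (Real.exp q - 1) - Real.exp q⌉ ≤ (f : ℤ) ∧
    (f : ℤ) ≤ ⌊(m : ℝ) * (Real.exp q - 1)⌋ := by
  have hn₁ : n + 1 = m + f := by omega
  have hm₀ : (0 : ℝ) < m := by positivity
  have hm₁ : (0 : ℝ) < m - 1 := by
    have : (2 : ℝ) ≤ m := by exact_mod_cast hm
    linarith
  rw [← Ico_add_one_right_eq_Icc, hn₁] at h1 h2
  have hupper : log (m + f) < q + log m := by
    have := log_sub_log_le_sum_Ico_inv (m := m) (n := m + f) (by omega) (by omega)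
    push_cast at this
    linarith
  have hlower : q + log (m - 1) < log (m + f) := by
    have := sum_Ico_inv_le_log_sub_log (m := m) (n := m + f + 1) (by omega) (by omega)
    push_cast at this
    rw [add_sub_cancel_right] at this
    linarith
  rw [log_lt_iff_lt_exp (by positivity), exp_add, exp_log hm₀] at hupper
  rw [lt_log_iff_exp_lt (by positivity), exp_add, exp_log hm₁] at hlower
  constructor
  · rw [Int.ceil_le]
    push_cast
    linarith
  · rw [Int.le_floor]
    push_cast
    linarith

theorem stmt4 (q m f n : ℕ) (hq : 1 ≤ q) (hm : 2 ≤ m) (hf : 1 ≤ f) (hn : n = m + f - 1)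
    (h1 : (∑ i ∈ Finset.Icc m n, (1 : ℝ) / i) < q)
    (h2 : (q : ℝ) < ∑ i ∈ Finset.Icc m (n + 1), (1 : ℝ) / i) :
    ⌈(m : ℝ) * (Real.exp q - 1) - Real.exp q⌉ ≤ (f : ℤ) ∧
    (f : ℤ) ≤ ⌊(m : ℝ) * (Real.exp q - 1)⌋ :=
  stmt4_general q m f n hm hn h1 h2
end

section
/- Let q, r be positive integers. If m ≥ 2 and f ≥ 1 are integers with n = m + f - 1 such that (1/r)∑_{i=m}^{n} 1/i < q < (1/r)∑_{i=m}^{n+1} 1/i, then ⌈m(e^{qr} - 1) - e^{qr}⌉ ≤ f ≤ ⌊m(e^{qr} - 1)⌋. -/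
lemma log_succ_sub_aux (N : ℕ) (hN : 1 ≤ N) :
    Real.log (N + 1) - Real.log N ≤ 1 / N := by
  have hN' : (0:ℝ) < N := by exact_mod_cast hN
  rw [← Real.log_div (by positivity) (ne_of_gt hN')]
  have h : ((N:ℝ)+1)/N = 1 + 1/N := by field_simp
  rw [h]
  have := Real.log_le_sub_one_of_pos (x := 1 + 1/(N:ℝ)) (by positivity)
  linarith

lemma inv_le_log_sub_aux (N : ℕ) (hN : 2 ≤ N) :
    1 / (N:ℝ) ≤ Real.log N - Real.log ((N:ℝ) - 1) := by
  have hN' : (2:ℝ) ≤ N := by exact_mod_cast hN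
  have h1 : (0:ℝ) < (N:ℝ) - 1 := by linarith
  have h0 : (0:ℝ) < N := by linarith
  have hlog := Real.log_le_sub_one_of_pos (x := ((N:ℝ)-1)/N) (by positivity)
  rw [Real.log_div (ne_of_gt h1) (ne_of_gt h0)] at hlog
  have heq : ((N:ℝ)-1)/N - 1 = -(1/N) := by field_simp; ring
  linarith

lemma sum_low_aux (m : ℕ) (hm : 1 ≤ m) : ∀ N, m ≤ N →
    Real.log N - Real.log m ≤ ∑ i ∈ Finset.Ico m N, (1:ℝ)/i := by
  intro N
  induction N with
  | zero => intro h; exfalso; omega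
  | succ k ih =>
    intro h
    rcases eq_or_lt_of_le h with heq | hlt
    · rw [← heq]; simp
    · have hk : m ≤ k := Nat.lt_succ_iff.mp hlt
      rw [Finset.sum_Ico_succ_top hk]
      have h1 := ih hk
      have h2 := log_succ_sub_aux k (le_trans hm hk)
      push_cast
      push_cast at h1 h2
      linarith

lemma sum_up_aux (m : ℕ) (hm : 2 ≤ m) : ∀ N, m ≤ N →
    ∑ i ∈ Finset.Ico m N, (1:ℝ)/i ≤ Real.log ((N:ℝ) - 1) - Real.log ((m:ℝ) - 1) := by
  intro N
  induction N with
  | zero => intro h; exfalso; omega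
  | succ k ih =>
    intro h
    rcases eq_or_lt_of_le h with heq | hlt
    · rw [← heq]; simp
    · have hk : m ≤ k := Nat.lt_succ_iff.mp hlt
      rw [Finset.sum_Ico_succ_top hk]
      have h1 := ih hk
      have h2 := inv_le_log_sub_aux k (le_trans hm hk)
      push_cast
      push_cast at h1 h2
      rw [show ((k:ℝ) + 1 - 1) = (k:ℝ) by ring]
      linarith

theorem stmt5 (q r m f n : ℕ) (hq : 1 ≤ q) (hr : 1 ≤ r) (hm : 2 ≤ m) (hf : 1 ≤ f)
    (hn : n = m + f - 1)
    (h1 : (1 / (r : ℝ)) * (∑ i ∈ Finset.Icc m n, (1 : ℝ) / i) < q)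
    (h2 : (q : ℝ) < (1 / (r : ℝ)) * ∑ i ∈ Finset.Icc m (n + 1), (1 : ℝ) / i) :
    ⌈(m : ℝ) * (Real.exp (q * r) - 1) - Real.exp (q * r)⌉ ≤ (f : ℤ) ∧
    (f : ℤ) ≤ ⌊(m : ℝ) * (Real.exp (q * r) - 1)⌋ := by
  have hrR : (0:ℝ) < r := by exact_mod_cast hr
  have hmR : (2:ℝ) ≤ m := by exact_mod_cast hm
  have hmpos : (0:ℝ) < m := by linarith
  have hm1 : (0:ℝ) < (m:ℝ) - 1 := by linarith
  have hfR : (1:ℝ) ≤ f := by exact_mod_cast hf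
  have key1 : (r:ℝ) * ((1/r) * (∑ i ∈ Finset.Icc m n, (1:ℝ)/i)) = ∑ i ∈ Finset.Icc m n, (1:ℝ)/i := by
    field_simp
  have key2 : (r:ℝ) * ((1/r) * (∑ i ∈ Finset.Icc m (n+1), (1:ℝ)/i)) = ∑ i ∈ Finset.Icc m (n+1), (1:ℝ)/i := by
    field_simp
  have hS1 : (∑ i ∈ Finset.Icc m n, (1:ℝ)/i) < (q:ℝ) * r := by
    have := mul_lt_mul_of_pos_left h1 hrR
    linarith [key1]
  have hS2 : (q:ℝ) * r < ∑ i ∈ Finset.Icc m (n+1), (1:ℝ)/i := by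
    have := mul_lt_mul_of_pos_left h2 hrR
    linarith [key2]
  have hlow : Real.log ((m:ℝ) + f) - Real.log m ≤ ∑ i ∈ Finset.Icc m n, (1:ℝ)/i := by
    have h := sum_low_aux m (by omega) (m + f) (by omega)
    have e : Finset.Icc m n = Finset.Ico m (m + f) := by
      rw [← Finset.Ico_add_one_right_eq_Icc]; congr 1; omega
    rw [e]
    push_cast at h ⊢
    linarith
  have hup : (∑ i ∈ Finset.Icc m (n+1), (1:ℝ)/i) ≤ Real.log ((m:ℝ) + f) - Real.log ((m:ℝ) - 1) := by
    have h := sum_up_aux m hm (m + f + 1) (by omega)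
    have e : Finset.Icc m (n+1) = Finset.Ico m (m + f + 1) := by
      rw [← Finset.Ico_add_one_right_eq_Icc]; congr 1; omega
    rw [e]
    push_cast at h ⊢
    rw [show ((m:ℝ) + f + 1 - 1) = (m:ℝ) + f by ring] at h
    linarith
  set E := Real.exp ((q:ℝ) * r) with hE
  have hmf : (0:ℝ) < (m:ℝ) + f := by linarith
  -- f < m*(E-1)
  have hlt1 : ((m:ℝ) + f) / m < E := by
    have h3 : Real.log ((m:ℝ)+f) - Real.log m < (q:ℝ) * r := by linarith
    have := Real.exp_lt_exp.mpr h3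
    rwa [Real.exp_sub, Real.exp_log hmf, Real.exp_log hmpos] at this
  have hup1 : (f:ℝ) < (m:ℝ) * (E - 1) := by
    have := (div_lt_iff₀ hmpos).mp hlt1
    nlinarith
  -- m*(E-1) - E < f
  have hlt2 : E < ((m:ℝ) + f) / ((m:ℝ) - 1) := by
    have h4 : (q:ℝ) * r < Real.log ((m:ℝ)+f) - Real.log ((m:ℝ)-1) := by linarith
    have := Real.exp_lt_exp.mpr h4
    rwa [Real.exp_sub, Real.exp_log hmf, Real.exp_log hm1] at this
  have hlow1 : (m:ℝ) * (E - 1) - E < f := by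
    have := (lt_div_iff₀ hm1).mp hlt2
    nlinarith
  constructor
  · apply Int.ceil_le.mpr
    push_cast
    linarith
  · apply Int.le_floor.mpr
    push_cast
    linarith
end

section
/- If m ≥ 2 and f ≥ 1 are integers with n = m + f - 1 such that ∑_{i=m}^{n} 1/i < 1 < ∑_{i=m}^{n+1} 1/i, then f = ⌊m(e-1) - e/2⌋ or f = ⌊m(e-1) - e/2⌋ + 1. -/
/-!
Since `log ((2i+1)/(2i-1)) = 2 artanh (1/(2i)) = 1/i + O(i⁻³)`, telescoping shows that
`∑_{i=m}^N 1/i` equals `log ((2N+1)/(2m-1))` up to an error in `[0, 1/(6(2m-1)²)]`.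
The two hypotheses therefore give `(2m-1)e < 2n+3` and
`2n+1 < (2m-1) e^{1 + 1/(6(2m-1)²)} < (2m-1)e + 1`; with `2n+1 = 2m+2f-1` this is
`f - 1 < m(e-1) - e/2 < f + 1/2`.
-/

open Real Finset

theorem Int.eq_floor_or_eq_floor_add_one {α : Type*} [Ring α] [LinearOrder α]
    [IsStrictOrderedRing α] [FloorRing α] {x : α} {k : ℤ} (h₁ : x < k + 1)
    (h₂ : k < x + 1) :
    k = ⌊x⌋ ∨ k = ⌊x⌋ + 1 := by
  have hlt : ⌊x⌋ < k + 1 := Int.floor_lt.2 (by push_cast; exact h₁)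
  have hle : k - 1 ≤ ⌊x⌋ := Int.le_floor.2 (by push_cast; exact (sub_lt_iff_lt_add.2 h₂).le)
  omega

theorem Finset.sum_Icc_le_sub_of_le {M : Type*} [AddCommGroup M] [PartialOrder M]
    [IsOrderedAddMonoid M] {a g : ℕ → M} {m N : ℕ} (hmN : m ≤ N + 1)
    (h : ∀ i ∈ Icc m N, a i ≤ g (i + 1) - g i) :
    ∑ i ∈ Icc m N, a i ≤ g (N + 1) - g m := by
  rw [← sum_Ico_sub g hmN, Ico_add_one_right_eq_Icc]
  exact sum_le_sum h

theorem Finset.sub_le_sum_Icc_of_le {M : Type*} [AddCommGroup M] [PartialOrder M]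
    [IsOrderedAddMonoid M] {a g : ℕ → M} {m N : ℕ} (hmN : m ≤ N + 1)
    (h : ∀ i ∈ Icc m N, g (i + 1) - g i ≤ a i) :
    g (N + 1) - g m ≤ ∑ i ∈ Icc m N, a i := by
  rw [← sum_Ico_sub g hmN, Ico_add_one_right_eq_Icc]
  exact sum_le_sum h

namespace Real

theorem two_mul_le_log_one_add_sub_log_one_sub {x : ℝ} (hx₀ : 0 ≤ x) (hx₁ : x < 1) :
    2 * x ≤ log (1 + x) - log (1 - x) := by
  have hs := hasSum_log_sub_log_of_abs_lt_one (abs_lt.2 ⟨by linarith, hx₁⟩)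
  simpa using le_hasSum hs 0 (fun k _ => by positivity)

theorem log_one_add_sub_log_one_sub_le {x : ℝ} (hx₀ : 0 ≤ x) (hx₁ : x < 1) :
    log (1 + x) - log (1 - x) ≤ 2 * x + 2 / 3 * x ^ 3 / (1 - x ^ 2) := by
  have htail := (hasSum_nat_add_iff' 1).2
    (hasSum_log_sub_log_of_abs_lt_one (abs_lt.2 ⟨by linarith, hx₁⟩))
  have hgeom : HasSum (fun k : ℕ => 2 / 3 * x ^ 3 * (x ^ 2) ^ k) (2 / 3 * x ^ 3 / (1 - x ^ 2)) :=
    (hasSum_geometric_of_lt_one (by positivity) (by nlinarith)).mul_left _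
  have hterm (k : ℕ) : 2 * (1 / (2 * ((k + 1 : ℕ) : ℝ) + 1)) * x ^ (2 * (k + 1) + 1) ≤
      2 / 3 * x ^ 3 * (x ^ 2) ^ k := by
    have hc : 1 / (2 * ((k + 1 : ℕ) : ℝ) + 1) ≤ 1 / 3 := by
      gcongr
      push_cast
      linarith [k.cast_nonneg (α := ℝ)]
    have hpow : x ^ (2 * (k + 1) + 1) = x ^ 3 * (x ^ 2) ^ k := by ring
    have : 0 ≤ x ^ 3 * (x ^ 2) ^ k := by positivity
    rw [hpow]
    nlinarith
  have hle := hasSum_le hterm htail hgeom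
  have hfirst : ∑ k ∈ range 1, 2 * (1 / (2 * (k : ℝ) + 1)) * x ^ (2 * k + 1) = 2 * x := by
    simp
  rw [hfirst] at hle
  linarith

theorem log_two_mul_add_one_sub_log_two_mul_sub_one {t : ℝ} (ht : 1 / 2 < t) :
    log (2 * t + 1) - log (2 * t - 1) = log (1 + (2 * t)⁻¹) - log (1 - (2 * t)⁻¹) := by
  have h₁ : 1 + (2 * t)⁻¹ = (2 * t + 1) / (2 * t) := by field_simp
  have h₂ : 1 - (2 * t)⁻¹ = (2 * t - 1) / (2 * t) := by field_simp
  rw [h₁, h₂, log_div, log_div] <;> linarith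

theorem one_div_le_log_two_mul_add_one_sub_log {t : ℝ} (ht : 1 / 2 < t) :
    1 / t ≤ log (2 * t + 1) - log (2 * t - 1) := by
  rw [log_two_mul_add_one_sub_log_two_mul_sub_one ht]
  have hx : (2 * t)⁻¹ < 1 := inv_lt_one_of_one_lt₀ (by linarith)
  convert two_mul_le_log_one_add_sub_log_one_sub (by positivity) hx using 1
  field_simp

theorem log_two_mul_add_one_sub_log_le {t : ℝ} (ht : 1 / 2 < t) :
    log (2 * t + 1) - log (2 * t - 1) ≤
      1 / t + 1 / (6 * (2 * t - 1) ^ 2) - 1 / (6 * (2 * t + 1) ^ 2) := by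
  rw [log_two_mul_add_one_sub_log_two_mul_sub_one ht]
  have hx : (2 * t)⁻¹ < 1 := inv_lt_one_of_one_lt₀ (by linarith)
  refine (log_one_add_sub_log_one_sub_le (by positivity) hx).trans ?_
  have h₀ : 0 < t := by linarith
  have h₁ : 0 < 2 * t - 1 := by linarith
  have hlin : 2 * (2 * t)⁻¹ = 1 / t := by field_simp
  have hcube : 2 / 3 * (2 * t)⁻¹ ^ 3 / (1 - (2 * t)⁻¹ ^ 2) =
      1 / (3 * t * (2 * t - 1) * (2 * t + 1)) := by
    rw [show 1 - (2 * t)⁻¹ ^ 2 = (2 * t - 1) * (2 * t + 1) / (2 * t) ^ 2 by field_simp; ring]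
    field_simp
  have hsq : 1 / (6 * (2 * t - 1) ^ 2) - 1 / (6 * (2 * t + 1) ^ 2) =
      1 / (3 * t * (2 * t - 1) * (2 * t + 1)) +
        1 / (3 * t * (2 * t - 1) ^ 2 * (2 * t + 1) ^ 2) := by
    field_simp
    ring
  have : 0 ≤ 1 / (3 * t * (2 * t - 1) ^ 2 * (2 * t + 1) ^ 2) := by positivity
  linarith

theorem mul_exp_lt_of_lt_log_sub_log {a b c : ℝ} (ha : 0 < a) (hb : 0 < b)
    (h : c < log b - log a) : a * exp c < b := by
  rw [← log_div hb.ne' ha.ne', lt_log_iff_exp_lt (div_pos hb ha), lt_div_iff₀ ha] at h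
  linarith

theorem lt_mul_exp_of_log_sub_log_lt {a b c : ℝ} (ha : 0 < a) (hb : 0 < b)
    (h : log b - log a < c) : b < a * exp c := by
  rw [← log_div hb.ne' ha.ne', log_lt_iff_lt_exp (div_pos hb ha), div_lt_iff₀ ha] at h
  linarith

theorem mul_exp_one_add_lt {M : ℝ} (hM : 1 ≤ M) :
    M * exp (1 + 1 / (6 * M ^ 2)) < M * exp 1 + 1 := by
  set δ := 1 / (6 * M ^ 2) with hδ
  have hδ₀ : 0 ≤ δ := by positivity
  have hδ₁ : δ ≤ 1 := by rw [hδ, div_le_one (by positivity)]; nlinarith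
  have hexp : exp δ ≤ 1 + 2 * δ := by
    have := abs_le.1 (abs_exp_sub_one_le (x := δ) (by rwa [abs_of_nonneg hδ₀]))
    rw [abs_of_nonneg hδ₀] at this
    linarith
  have hMδ : M * δ ≤ 1 / 6 := by
    rw [hδ, mul_one_div, div_le_div_iff₀ (by positivity) (by norm_num)]; nlinarith
  have he := exp_one_lt_three
  calc M * exp (1 + δ) = M * exp 1 * exp δ := by rw [exp_add, mul_assoc]
    _ ≤ M * exp 1 * (1 + 2 * δ) := by gcongr
    _ = M * exp 1 + 2 * exp 1 * (M * δ) := by ring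
    _ < M * exp 1 + 1 := by nlinarith [exp_pos 1]

end Real

theorem sum_Icc_one_div_le_log (m N : ℕ) (hm : 1 ≤ m) (hmN : m ≤ N + 1) :
    ∑ i ∈ Icc m N, (1 : ℝ) / i ≤ log (2 * N + 1) - log (2 * m - 1) := by
  have hodd (i : ℕ) : 2 * ((i + 1 : ℕ) : ℝ) - 1 = 2 * i + 1 := by push_cast; ring
  have hsum := sum_Icc_le_sub_of_le (a := fun i : ℕ => (1 : ℝ) / i)
    (g := fun i : ℕ => log (2 * i - 1)) hmN fun i hi => ?_
  · rwa [hodd] at hsum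
  · have hi : (1 : ℝ) ≤ i := by exact_mod_cast hm.trans (mem_Icc.1 hi).1
    simp only [hodd]
    exact one_div_le_log_two_mul_add_one_sub_log (by linarith)

theorem log_sub_le_sum_Icc_one_div (m N : ℕ) (hm : 1 ≤ m) (hmN : m ≤ N + 1) :
    log (2 * N + 1) - log (2 * m - 1) - 1 / (6 * (2 * m - 1) ^ 2) ≤
      ∑ i ∈ Icc m N, (1 : ℝ) / i := by
  have hodd (i : ℕ) : 2 * ((i + 1 : ℕ) : ℝ) - 1 = 2 * i + 1 := by push_cast; ring
  have hsum := sub_le_sum_Icc_of_le (a := fun i : ℕ => (1 : ℝ) / i)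
    (g := fun i : ℕ => log (2 * i - 1) + 1 / (6 * (2 * i - 1) ^ 2)) hmN fun i hi => ?_
  · simp only [hodd] at hsum
    have : 0 ≤ 1 / (6 * (2 * (N : ℝ) + 1) ^ 2) := by positivity
    linarith
  · have hi : (1 : ℝ) ≤ i := by exact_mod_cast hm.trans (mem_Icc.1 hi).1
    have := log_two_mul_add_one_sub_log_le (t := i) (by linarith)
    simp only [hodd]
    linarith

theorem stmt8_general (m f n : ℕ) (hm : 2 ≤ m) (hn : n = m + f - 1)
    (h1 : (∑ i ∈ Finset.Icc m n, (1 : ℝ) / i) < 1)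
    (h2 : (1 : ℝ) < ∑ i ∈ Finset.Icc m (n + 1), (1 : ℝ) / i) :
    (f : ℤ) = ⌊(m : ℝ) * (Real.exp 1 - 1) - Real.exp 1 / 2⌋ ∨
    (f : ℤ) = ⌊(m : ℝ) * (Real.exp 1 - 1) - Real.exp 1 / 2⌋ + 1 := by
  have hM : (3 : ℝ) ≤ 2 * m - 1 := by
    have : (2 : ℝ) ≤ m := by exact_mod_cast hm
    linarith
  have hn' : (n : ℝ) = m + f - 1 := by
    rw [hn, Nat.cast_sub (by omega)]; push_cast; ring
  have hupper : (2 * m - 1) * exp 1 < 2 * m + 2 * f + 1 := by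
    have hlog := h2.trans_le (sum_Icc_one_div_le_log m (n + 1) (by omega) (by omega))
    have hexp := mul_exp_lt_of_lt_log_sub_log (by linarith) (by positivity) hlog
    push_cast at hexp
    linarith
  have hlower : 2 * m + 2 * f - 1 < (2 * m - 1) * exp 1 + 1 := by
    have hlog := (log_sub_le_sum_Icc_one_div m n (by omega) (by omega)).trans_lt h1
    have hexp := lt_mul_exp_of_log_sub_log_lt (by linarith) (by positivity)
      (sub_lt_iff_lt_add.1 hlog)
    linarith [hexp.trans (mul_exp_one_add_lt (by linarith))]
  apply Int.eq_floor_or_eq_floor_add_one <;> push_cast <;> linarith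

theorem stmt8 (m f n : ℕ) (hm : 2 ≤ m) (hf : 1 ≤ f) (hn : n = m + f - 1)
    (h1 : (∑ i ∈ Finset.Icc m n, (1 : ℝ) / i) < 1)
    (h2 : (1 : ℝ) < ∑ i ∈ Finset.Icc m (n + 1), (1 : ℝ) / i) :
    (f : ℤ) = ⌊(m : ℝ) * (Real.exp 1 - 1) - Real.exp 1 / 2⌋ ∨
    (f : ℤ) = ⌊(m : ℝ) * (Real.exp 1 - 1) - Real.exp 1 / 2⌋ + 1 :=
  stmt8_general m f n hm hn h1 h2
end

section
/- For every integer m ≥ 2 and positive integer q, there exists a unique integer f ≥ 1 such that, with n = m + f - 1, ∑_{i=m}^{n} 1/i < q < ∑_{i=m}^{n+1} 1/i. -/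
open Finset

lemma sup_ne_val_succ {m n : ℕ} (hm : 1 ≤ m) (hmn : m ≤ n) :
    (Icc m n).sup (padicValNat 2) ≠ padicValNat 2 (n + 1) := by
  intro h
  obtain ⟨i, hi, hvi⟩ := Finset.exists_mem_eq_sup (Icc m n) (Finset.nonempty_Icc.2 hmn)
    (padicValNat 2)
  rw [Finset.mem_Icc] at hi
  set a := padicValNat 2 (n + 1) with ha
  have hia : padicValNat 2 i = a := by rw [← hvi, h]
  have hi0 : i ≠ 0 := by omega
  have hdvd_i : 2 ^ a ∣ i := hia ▸ pow_padicValNat_dvd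
  have hndvd_i : ¬ 2 ^ (a + 1) ∣ i := hia ▸ pow_succ_padicValNat_not_dvd hi0
  have hdvd_n : 2 ^ a ∣ (n + 1) := pow_padicValNat_dvd
  have hndvd_n : ¬ 2 ^ (a + 1) ∣ (n + 1) := pow_succ_padicValNat_not_dvd (by omega)
  obtain ⟨b, hb⟩ := hdvd_i
  obtain ⟨c, hc⟩ := hdvd_n
  have hbodd : ¬ 2 ∣ b := fun ⟨b', hb'⟩ => hndvd_i ⟨b', by rw [hb, hb']; ring⟩
  have hcodd : ¬ 2 ∣ c := fun ⟨c', hc'⟩ => hndvd_n ⟨c', by rw [hc, hc']; ring⟩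
  have hpa : 0 < 2 ^ a := Nat.pow_pos (by norm_num)
  have hbc : b < c := by
    by_contra hbc
    push_neg at hbc
    have : n + 1 ≤ i := by rw [hb, hc]; exact Nat.mul_le_mul_left _ hbc
    omega
  have hbc2 : b + 2 ≤ c := by
    rcases Nat.lt_or_ge (b+1) c with h' | h'
    · omega
    · have : c = b + 1 := by omega
      subst this
      omega
  -- j = 2^a * (b+1)
  have hjmem : 2 ^ a * (b + 1) ∈ Icc m n := by
    rw [Finset.mem_Icc]
    constructor
    · calc m ≤ i := hi.1
        _ ≤ 2 ^ a * (b + 1) := by rw [hb]; exact Nat.mul_le_mul_left _ (by omega)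
    · have : 2 ^ a * (b + 1) + 2 ^ a ≤ n + 1 := by
        rw [hc]
        calc 2 ^ a * (b+1) + 2^a = 2 ^ a * (b + 2) := by ring
          _ ≤ 2 ^ a * c := Nat.mul_le_mul_left _ hbc2
      omega
  have hjdvd : 2 ^ (a + 1) ∣ 2 ^ a * (b + 1) := by
    have : 2 ∣ b + 1 := by omega
    obtain ⟨d, hd⟩ := this
    exact ⟨d, by rw [hd]; ring⟩
  have hj0 : 2 ^ a * (b + 1) ≠ 0 := by positivity
  have hv : a + 1 ≤ padicValNat 2 (2 ^ a * (b + 1)) :=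
    (padicValNat_dvd_iff_le hj0).mp hjdvd
  have hsup : padicValNat 2 (2 ^ a * (b + 1)) ≤ (Icc m n).sup (padicValNat 2) :=
    Finset.le_sup hjmem
  omega

lemma sum_Icc_pos {m n : ℕ} (hm : 1 ≤ m) (hmn : m ≤ n) :
    0 < ∑ i ∈ Icc m n, (1 : ℚ) / i := by
  apply Finset.sum_pos
  · intro i hi
    rw [Finset.mem_Icc] at hi
    have : (0:ℚ) < i := by exact_mod_cast (by omega : 0 < i)
    positivity
  · exact Finset.nonempty_Icc.2 hmn

lemma padicValRat_sum_Icc {m : ℕ} (hm : 1 ≤ m) : ∀ n, m ≤ n →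
    padicValRat 2 (∑ i ∈ Icc m n, (1 : ℚ) / i) =
      -(((Icc m n).sup (padicValNat 2) : ℕ) : ℤ) := by
  intro n hn
  induction n, hn using Nat.le_induction with
  | base =>
    rw [Finset.Icc_self, Finset.sum_singleton, Finset.sup_singleton, one_div,
      padicValRat.inv, padicValRat.of_nat]
  | succ n hn ih =>
    have hni : (n + 1) ∉ Icc m n := by simp
    have hins : Icc m (n + 1) = insert (n + 1) (Icc m n) := by
      ext x
      simp only [Finset.mem_Icc, Finset.mem_insert]
      omega
    rw [hins, Finset.sum_insert hni, Finset.sup_insert]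
    have h1 : (1 : ℚ) / ((n + 1 : ℕ) : ℚ) ≠ 0 := by positivity
    have h2 : (∑ i ∈ Icc m n, (1 : ℚ) / i) ≠ 0 := (sum_Icc_pos hm hn).ne'
    have h12 : (1 : ℚ) / ((n + 1 : ℕ) : ℚ) + ∑ i ∈ Icc m n, (1 : ℚ) / i ≠ 0 := by
      have h := sum_Icc_pos hm hn
      have h' : (0:ℚ) < 1 / ((n + 1 : ℕ) : ℚ) := by
        have : (0:ℚ) < ((n + 1 : ℕ) : ℚ) := by exact_mod_cast Nat.succ_pos n
        positivity
      linarith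
    have hv1 : padicValRat 2 ((1 : ℚ) / ((n + 1 : ℕ) : ℚ)) = -(padicValNat 2 (n + 1) : ℤ) := by
      rw [one_div, padicValRat.inv, padicValRat.of_nat]
    have hne : padicValRat 2 ((1 : ℚ) / ((n + 1 : ℕ) : ℚ)) ≠
        padicValRat 2 (∑ i ∈ Icc m n, (1 : ℚ) / i) := by
      rw [hv1, ih, Ne, neg_inj, Nat.cast_inj]
      exact fun h => (sup_ne_val_succ hm hn) h.symm
    rw [padicValRat.add_eq_min h12 h1 h2 hne, hv1, ih, min_neg_neg, ← Nat.cast_max]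

lemma sum_Icc_ne_nat {m n q : ℕ} (hm : 2 ≤ m) (hmn : m ≤ n) (hq : 1 ≤ q) :
    (∑ i ∈ Icc m n, (1 : ℝ) / i) ≠ (q : ℝ) := by
  have key : (∑ i ∈ Icc m n, (1 : ℚ) / i) ≠ (q : ℚ) := by
    rcases eq_or_lt_of_le hmn with rfl | hlt
    · rw [Finset.Icc_self, Finset.sum_singleton]
      intro h
      have hm2 : (2 : ℚ) ≤ (m : ℚ) := by exact_mod_cast hm
      have h1 : (1 : ℚ) / m ≤ 1 / 2 := by
        apply one_div_le_one_div_of_le (by norm_num) hm2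
      have h2 : (1 : ℚ) ≤ q := by exact_mod_cast hq
      rw [h] at h1
      linarith
    · intro h
      have hval := padicValRat_sum_Icc (by omega : 1 ≤ m) n hmn
      have hsup : 1 ≤ (Icc m n).sup (padicValNat 2) := by
        obtain ⟨e, he, hed⟩ : ∃ e, e ∈ Icc m n ∧ 2 ∣ e := by
          rcases Nat.even_or_odd m with he | ho
          · exact ⟨m, Finset.mem_Icc.2 ⟨le_refl m, hmn⟩, he.two_dvd⟩
          · exact ⟨m + 1, Finset.mem_Icc.2 ⟨by omega, by omega⟩,
              by rcases ho with ⟨k, hk⟩; omega⟩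
        calc 1 ≤ padicValNat 2 e := one_le_padicValNat_of_dvd
                (by rw [Finset.mem_Icc] at he; omega) hed
          _ ≤ _ := Finset.le_sup he
      rw [h, padicValRat.of_nat] at hval
      omega
  intro h
  apply key
  have hcast : ((∑ i ∈ Icc m n, (1 : ℚ) / i : ℚ) : ℝ) = ∑ i ∈ Icc m n, (1 : ℝ) / i := by
    push_cast
    rfl
  rw [← hcast] at h
  exact_mod_cast h

lemma exists_big (m q : ℕ) (hm : 1 ≤ m) :
    ∃ f : ℕ, (q : ℝ) < ∑ i ∈ Icc m (m + f), (1 : ℝ) / i := by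
  have hdiv := Real.tendsto_sum_range_one_div_nat_succ_atTop
  obtain ⟨N, hN, hNm⟩ := ((hdiv.eventually_gt_atTop
    ((q : ℝ) + ∑ i ∈ Finset.range (m - 1), (1 : ℝ) / (i + 1))).and
    (Filter.eventually_ge_atTop m)).exists
  refine ⟨N, ?_⟩
  have hsplit : (∑ i ∈ Finset.range (m - 1), (1 : ℝ) / (i + 1)) +
      (∑ i ∈ Finset.Ico (m - 1) N, (1 : ℝ) / (i + 1)) =
      ∑ i ∈ Finset.range N, (1 : ℝ) / (i + 1) := by
    rw [Finset.range_eq_Ico, Finset.range_eq_Ico]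
    exact Finset.sum_Ico_consecutive (fun i : ℕ => (1 : ℝ) / (i + 1)) (m := 0) (n := m - 1) (k := N) (by omega) (by omega)
  have hshift : (∑ i ∈ Finset.Ico (m - 1) N, (1 : ℝ) / (i + 1)) =
      ∑ i ∈ Finset.Ico m (N + 1), (1 : ℝ) / i := by
    rw [Finset.sum_Ico_eq_sum_range, Finset.sum_Ico_eq_sum_range]
    have hlen : N - (m - 1) = N + 1 - m := by omega
    rw [hlen]
    apply Finset.sum_congr rfl
    intro i _
    congr 1
    have : m - 1 + i + 1 = m + i := by omega
    push_cast [← this]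
    ring
  have hsub : (∑ i ∈ Finset.Ico m (N + 1), (1 : ℝ) / i) ≤
      ∑ i ∈ Icc m (m + N), (1 : ℝ) / i := by
    apply Finset.sum_le_sum_of_subset_of_nonneg
    · intro x hx
      rw [Finset.mem_Ico] at hx
      rw [Finset.mem_Icc]
      omega
    · intro i _ _
      positivity
  have : (q : ℝ) < ∑ i ∈ Finset.Ico m (N + 1), (1 : ℝ) / i := by
    rw [← hshift]
    linarith [hsplit, hN]
  linarith

theorem stmt9 (m q : ℕ) (hm : 2 ≤ m) (hq : 1 ≤ q) :
    ∃! f : ℕ, 1 ≤ f ∧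
      (∑ i ∈ Finset.Icc m (m + f - 1), (1 : ℝ) / i) < q ∧
      (q : ℝ) < ∑ i ∈ Finset.Icc m (m + f - 1 + 1), (1 : ℝ) / i := by
  classical
  have hex : ∃ f : ℕ, (q : ℝ) < ∑ i ∈ Icc m (m + f), (1 : ℝ) / i :=
    exists_big m q (by omega)
  set f0 := Nat.find hex with hf0
  have hspec : (q : ℝ) < ∑ i ∈ Icc m (m + f0), (1 : ℝ) / i := Nat.find_spec hex
  have hf0pos : 1 ≤ f0 := by
    rcases Nat.eq_zero_or_pos f0 with h0 | h
    · exfalso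
      rw [h0] at hspec
      simp only [Nat.add_zero, Finset.Icc_self, Finset.sum_singleton] at hspec
      have hm2 : (2 : ℝ) ≤ (m : ℝ) := by exact_mod_cast hm
      have : (1 : ℝ) / m ≤ 1 / 2 := one_div_le_one_div_of_le (by norm_num) hm2
      have hq1 : (1 : ℝ) ≤ q := by exact_mod_cast hq
      linarith
    · exact h
  have hmin : ¬ ((q : ℝ) < ∑ i ∈ Icc m (m + (f0 - 1)), (1 : ℝ) / i) :=
    Nat.find_min hex (by omega)
  push_neg at hmin
  have heq1 : m + f0 - 1 = m + (f0 - 1) := by omega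
  have heq2 : m + f0 - 1 + 1 = m + f0 := by omega
  refine ⟨f0, ⟨hf0pos, ?_, ?_⟩, ?_⟩
  · rw [heq1]
    exact lt_of_le_of_ne hmin (sum_Icc_ne_nat hm (by omega) hq)
  · rw [heq2]
    exact hspec
  · rintro y ⟨hy1, hy2, hy3⟩
    by_contra hne
    rcases Nat.lt_or_ge y f0 with hlt | hge
    · have := Nat.find_min hex hlt
      apply this
      have : m + y - 1 + 1 = m + y := by omega
      rwa [this] at hy3
    · have hgt : f0 < y := by omega
      have hsub : Icc m (m + f0) ⊆ Icc m (m + y - 1) := by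
        intro x hx
        rw [Finset.mem_Icc] at hx ⊢
        omega
      have : (∑ i ∈ Icc m (m + f0), (1 : ℝ) / i) ≤ ∑ i ∈ Icc m (m + y - 1), (1 : ℝ) / i := by
        apply Finset.sum_le_sum_of_subset_of_nonneg hsub
        intro i _ _
        positivity
      linarith
end

section
/- For all integers 1 < m ≤ n, the harmonic sum ∑_{i=m}^{n} 1/i is not an integer. -/
lemma pnorm_one_div (j : ℕ) (hj : j ≠ 0) :
    padicNorm 2 ((1 : ℚ) / j) = 2 ^ (padicValNat 2 j : ℤ) := by
  have hj' : ((1:ℚ)/j) ≠ 0 := by positivity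
  rw [padicNorm.eq_zpow_of_nonzero hj', one_div, padicValRat.inv,
    padicValRat.of_nat, neg_neg]
  norm_num

theorem stmt10 (m n : ℕ) (hm : 1 < m) (hmn : m ≤ n) :
    ∀ k : ℤ, (∑ i ∈ Finset.Icc m n, (1 : ℚ) / i) ≠ (k : ℚ) := by
  intro k
  rcases eq_or_lt_of_le hmn with rfl | hlt
  · rw [Finset.Icc_self, Finset.sum_singleton]
    intro h
    have h0 : (0:ℚ) < 1 / m := by positivity
    have h1 : (1:ℚ) / m < 1 := by
      rw [div_lt_one (by positivity)]; exact_mod_cast hm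
    rw [h] at h0 h1
    have : (0:ℤ) < k := by exact_mod_cast h0
    have : (k:ℤ) < 1 := by exact_mod_cast h1
    omega
  set s := Finset.Icc m n with hs
  have hne : s.Nonempty := ⟨m, by simp [hs, hmn]⟩
  set v := s.sup (padicValNat 2) with hv
  obtain ⟨i0, hi0s, hi0⟩ := Finset.exists_mem_eq_sup s hne (padicValNat 2)
  have hmem : ∀ j ∈ s, m ≤ j ∧ j ≤ n := by intro j hj; simpa [hs] using hj
  have hjpos : ∀ j ∈ s, 0 < j := fun j hj => lt_of_lt_of_le (by omega) (hmem j hj).1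
  -- v ≥ 1
  have hv1 : 1 ≤ v := by
    have : ∃ e ∈ s, 2 ∣ e := by
      rcases Nat.even_or_odd m with he | ho
      · exact ⟨m, by simp [hs, hmn], he.two_dvd⟩
      · obtain ⟨c, hc⟩ := ho
        exact ⟨m + 1, by simp [hs]; omega, by omega⟩
    obtain ⟨e, hes, hde⟩ := this
    calc 1 ≤ padicValNat 2 e := one_le_padicValNat_of_dvd (hjpos e hes).ne' hde
      _ ≤ v := Finset.le_sup hes
  -- uniqueness of max valuation
  have key : ∀ i ∈ s, ∀ j ∈ s, i < j → padicValNat 2 i = v → padicValNat 2 j = v → False := by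
    intro i his j hjs hij hiv hjv
    have hdi : 2 ^ v ∣ i := hiv ▸ pow_padicValNat_dvd
    have hdj : 2 ^ v ∣ j := hjv ▸ pow_padicValNat_dvd
    obtain ⟨a, rfl⟩ := hdi
    obtain ⟨b, rfl⟩ := hdj
    have hpow : 0 < 2 ^ v := Nat.pow_pos (by norm_num)
    have hab : a < b := Nat.lt_of_mul_lt_mul_left hij
    have ha : ¬ 2 ∣ a := by
      intro hda
      obtain ⟨c, rfl⟩ := hda
      have hdvd : 2 ^ (v + 1) ∣ 2 ^ v * (2 * c) := ⟨c, by ring⟩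
      have hle : v + 1 ≤ padicValNat 2 (2 ^ v * (2 * c)) :=
        (padicValNat_dvd_iff_le (hjpos _ his).ne').mp hdvd
      omega
    -- c := 2^v * (a+1) is in s with valuation > v
    have hcs : 2 ^ v * (a + 1) ∈ s := by
      have h1 : m ≤ 2 ^ v * (a + 1) := le_trans (hmem _ his).1 (by nlinarith)
      have h2 : 2 ^ v * (a + 1) ≤ n := le_trans (by nlinarith [Nat.succ_le_of_lt hab]) (hmem _ hjs).2
      simp [hs]; omega
    have hdc : 2 ^ (v + 1) ∣ 2 ^ v * (a + 1) := by
      have : 2 ∣ a + 1 := by omega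
      obtain ⟨c, hc⟩ := this
      exact ⟨c, by rw [hc]; ring⟩
    have hle : v + 1 ≤ padicValNat 2 (2 ^ v * (a + 1)) :=
      (padicValNat_dvd_iff_le (by positivity)).mp hdc
    have : padicValNat 2 (2 ^ v * (a + 1)) ≤ v := Finset.le_sup hcs
    omega
  have huniq : ∀ j ∈ s, j ≠ i0 → padicValNat 2 j < v := by
    intro j hjs hne'
    rcases lt_or_eq_of_le (Finset.le_sup (f := padicValNat 2) hjs) with h | h
    · exact h
    · exfalso
      rcases lt_trichotomy j i0 with h1 | h1 | h1
      · exact key j hjs i0 hi0s h1 h hi0.symm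
      · exact hne' h1
      · exact key i0 hi0s j hjs h1 hi0.symm h
  -- norms
  have hnorm_i0 : padicNorm 2 ((1:ℚ)/i0) = 2 ^ (v : ℤ) := by
    rw [pnorm_one_div i0 (hjpos i0 hi0s).ne', hv, hi0]
  have hsplit : (∑ i ∈ s, (1:ℚ)/i) = (1:ℚ)/i0 + ∑ i ∈ s.erase i0, (1:ℚ)/i :=
    (Finset.add_sum_erase s _ hi0s).symm
  have hrest : padicNorm 2 (∑ i ∈ s.erase i0, (1:ℚ)/i) < 2 ^ (v : ℤ) := by
    apply padicNorm.sum_lt'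
    · intro j hj
      have hjs := Finset.mem_of_mem_erase hj
      rw [pnorm_one_div j (hjpos j hjs).ne']
      exact zpow_lt_zpow_right₀ (by norm_num) (by exact_mod_cast huniq j hjs (Finset.ne_of_mem_erase hj))
    · positivity
  have hmain : padicNorm 2 (∑ i ∈ s, (1:ℚ)/i) = 2 ^ (v : ℤ) := by
    rw [hsplit, padicNorm.add_eq_max_of_ne (by rw [hnorm_i0]; exact (ne_of_lt hrest).symm),
      hnorm_i0, max_eq_left (le_of_lt hrest)]
  intro hk
  have h1 : (1:ℚ) < padicNorm 2 (∑ i ∈ s, (1:ℚ)/i) := by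
    rw [hmain]
    calc (1:ℚ) < 2 ^ (1:ℤ) := by norm_num
      _ ≤ 2 ^ (v:ℤ) := zpow_le_zpow_right₀ (by norm_num) (by exact_mod_cast hv1)
  rw [hk] at h1
  exact absurd (padicNorm.of_int k) (not_le.mpr h1)
end

section
/- If m ≥ 2, q ≥ 1, r ≥ 1 are integers and f ≥ 1 satisfies, with n = m+f-1, (1/r)∑_{i=m}^{n} 1/i < q < (1/r)∑_{i=m}^{n+1} 1/i, then either ⌈m(e^{qr}-1) - e^{qr}⌉ ≤ f ≤ ⌊m(e^{qr}-1) - e^{qr}/2⌋ or ⌊m(e^{qr}-1) - e^{qr}/2⌋ + 1 ≤ f ≤ ⌊m(e^{qr}-1)⌋. -/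
/-!
Comparing each `1/i` with `log (i+1) - log i` from below and with `log i - log (i-1)` from above,
the sum of `1/i` over `m ≤ i < b` lies between `log (b/m)` and `log ((b-1)/(m-1))`. With `E = e^{qr}`
the two hypotheses therefore give `m + f < m E` and `(m - 1) E < m + f`, i.e.
`m(E-1) - E < f < m(E-1)`; the two alternatives just split this range at `m(E-1) - E/2`.
-/

open Real Finset

lemma log_add_one_div_le_inv {x : ℝ} (hx : 0 < x) : log ((x + 1) / x) ≤ x⁻¹ := by
  have h := log_le_sub_one_of_pos (x := (x + 1) / x) (by positivity)
  rwa [show (x + 1) / x - 1 = x⁻¹ by field_simp; ring] at h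

lemma inv_le_log_div_sub_one {x : ℝ} (hx : 1 < x) : x⁻¹ ≤ log (x / (x - 1)) := by
  have h := one_sub_inv_le_log_of_pos (x := x / (x - 1)) (div_pos (by linarith) (by linarith))
  rwa [show 1 - (x / (x - 1))⁻¹ = x⁻¹ by field_simp; ring] at h

theorem log_div_le_sum_Ico_inv {a b : ℕ} (ha : 0 < a) (hab : a ≤ b) :
    log (b / a) ≤ ∑ i ∈ Ico a b, (i : ℝ)⁻¹ := by
  induction b, hab using Nat.le_induction with
  | base =>
    have : (a : ℝ) ≠ 0 := by positivity
    simp [this]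
  | succ b hab ih =>
    have hb : (0 : ℝ) < b := Nat.cast_pos.2 (ha.trans_le hab)
    rw [sum_Ico_succ_top hab, Nat.cast_add_one,
      show ((b : ℝ) + 1) / a = b / a * ((b + 1) / b) by field_simp,
      log_mul (by positivity) (by positivity)]
    exact add_le_add ih (log_add_one_div_le_inv hb)

theorem sum_Ico_inv_le_log_div {a b : ℕ} (ha : 1 < a) (hab : a ≤ b) :
    ∑ i ∈ Ico a b, (i : ℝ)⁻¹ ≤ log ((b - 1) / (a - 1)) := by
  induction b, hab using Nat.le_induction with
  | base =>
    have : (a : ℝ) - 1 ≠ 0 := (sub_pos.2 (Nat.one_lt_cast.2 ha)).ne'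
    simp [this]
  | succ b hab ih =>
    have hb : (1 : ℝ) < b := Nat.one_lt_cast.2 (ha.trans_le hab)
    have ha' : (1 : ℝ) < a := Nat.one_lt_cast.2 ha
    have hb' : (0 : ℝ) < b - 1 := by linarith
    have ha'' : (0 : ℝ) < a - 1 := by linarith
    rw [sum_Ico_succ_top hab, Nat.cast_add_one, add_sub_cancel_right,
      show (b : ℝ) / (a - 1) = (b - 1) / (a - 1) * (b / (b - 1)) by field_simp,
      log_mul (by positivity) (by positivity)]
    exact add_le_add ih (inv_le_log_div_sub_one hb)

lemma Int.ceil_le_and_le_floor_or {a b c : ℝ} {k : ℤ} (ha : a ≤ k) (hc : k ≤ c) :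
    (⌈a⌉ ≤ k ∧ k ≤ ⌊b⌋) ∨ (⌊b⌋ + 1 ≤ k ∧ k ≤ ⌊c⌋) := by
  rcases le_or_gt k ⌊b⌋ with h | h
  · exact .inl ⟨Int.ceil_le.2 ha, h⟩
  · exact .inr ⟨h, Int.le_floor.2 hc⟩

theorem stmt16_general (m q r f n : ℕ) (hm : 2 ≤ m) (hr : 1 ≤ r)
    (hn : n = m + f - 1)
    (h1 : (1 / (r : ℝ)) * (∑ i ∈ Finset.Icc m n, (1 : ℝ) / i) < q)
    (h2 : (q : ℝ) < (1 / (r : ℝ)) * ∑ i ∈ Finset.Icc m (n + 1), (1 : ℝ) / i) :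
    (⌈(m : ℝ) * (Real.exp (q * r) - 1) - Real.exp (q * r)⌉ ≤ (f : ℤ) ∧
      (f : ℤ) ≤ ⌊(m : ℝ) * (Real.exp (q * r) - 1) - Real.exp (q * r) / 2⌋) ∨
    (⌊(m : ℝ) * (Real.exp (q * r) - 1) - Real.exp (q * r) / 2⌋ + 1 ≤ (f : ℤ) ∧
      (f : ℤ) ≤ ⌊(m : ℝ) * (Real.exp (q * r) - 1)⌋) := by
  have hr' : (0 : ℝ) < r := by exact_mod_cast hr
  have hm' : (1 : ℝ) < m := by exact_mod_cast hm
  rw [← Ico_add_one_right_eq_Icc, show n + 1 = m + f by omega] at h1 h2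
  simp only [one_div, inv_mul_lt_iff₀ hr', lt_inv_mul_iff₀ hr'] at h1 h2
  have hlower := (log_div_le_sum_Ico_inv (by omega) (Nat.le_add_right m f)).trans_lt h1
  have hupper := h2.trans_le (sum_Ico_inv_le_log_div hm (by omega))
  push_cast at hlower hupper
  rw [mul_comm (r : ℝ)] at hlower hupper
  rw [log_lt_iff_lt_exp (by positivity), div_lt_iff₀ (by positivity)] at hlower
  rw [add_sub_cancel_right, lt_log_iff_exp_lt (by positivity), lt_div_iff₀ (by linarith)] at hupper
  apply Int.ceil_le_and_le_floor_or <;> push_cast <;> linarith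

theorem stmt16 (m q r f n : ℕ) (hm : 2 ≤ m) (hq : 1 ≤ q) (hr : 1 ≤ r) (hf : 1 ≤ f)
    (hn : n = m + f - 1)
    (h1 : (1 / (r : ℝ)) * (∑ i ∈ Finset.Icc m n, (1 : ℝ) / i) < q)
    (h2 : (q : ℝ) < (1 / (r : ℝ)) * ∑ i ∈ Finset.Icc m (n + 1), (1 : ℝ) / i) :
    (⌈(m : ℝ) * (Real.exp (q * r) - 1) - Real.exp (q * r)⌉ ≤ (f : ℤ) ∧
      (f : ℤ) ≤ ⌊(m : ℝ) * (Real.exp (q * r) - 1) - Real.exp (q * r) / 2⌋) ∨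
    (⌊(m : ℝ) * (Real.exp (q * r) - 1) - Real.exp (q * r) / 2⌋ + 1 ≤ (f : ℤ) ∧
      (f : ℤ) ≤ ⌊(m : ℝ) * (Real.exp (q * r) - 1)⌋) :=
  stmt16_general m q r f n hm hr hn h1 h2
end
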